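/- Let S be a non-finitely-generated semigroup. Then scf(S) > ℵ₀ if and only if cf(S) > ℵ₀ and S has Bergman's property. -/

import Mathlib

/-!
A chain of proper subsemigroups covering `S` is in particular a chain of subsets with `SₘSₘ ⊆ Sₘ₊₁`,
and if a generating set `A` violates Bergman's property, the partial unions
`⋃_{k < 2ⁿ} Aᵏ⁺¹` form a countable chain of proper subsets with exactly this property.
Conversely, given such a chain `(Cₘ)`, induction gives `Cₘᵏ⁺¹ ⊆ Cₘ₊ₖ`; so if some `Cₘ` generates
`S`, Bergman's property puts all of `S` into a single proper `Cₘ₊ₙ`, and otherwise the subsemigroups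
generated by the `Cₘ` form a countable chain of proper subsemigroups covering `S`.
-/

open Pointwise

/-- `spowSet A k` is the set power `A^(k+1)`. -/
def spowSet {M : Type*} [Mul M] (A : Set M) : ℕ → Set M
  | 0 => A
  | k + 1 => spowSet A k * A

open Subsemigroup

section Mul

variable (S : Type*) [Mul S]

def BergmanProperty : Prop :=
  ∀ A : Set S, closure A = ⊤ → ∃ n : ℕ, ∀ s : S, ∃ m ≤ n, s ∈ spowSet A m

variable {S}

def IsCofinalChain (C : ℕ → Subsemigroup S) : Prop :=
  (∀ m, C m ≤ C (m + 1)) ∧ (∀ m, C m ≠ ⊤) ∧ (⋃ m, (C m : Set S)) = Set.univ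

def IsStrongCofinalChain (C : ℕ → Set S) : Prop :=
  (∀ m, C m ⊆ C (m + 1)) ∧ (∀ m, C m ≠ Set.univ) ∧
    (⋃ m, C m) = Set.univ ∧ (∀ m, ∀ s ∈ C m, ∀ t ∈ C m, s * t ∈ C (m + 1))

theorem spowSet_subset_closure (A : Set S) : ∀ k, spowSet A k ⊆ (closure A : Set S)
  | 0 => subset_closure
  | k + 1 => by
    rintro _ ⟨a, ha, b, hb, rfl⟩
    exact mul_mem (spowSet_subset_closure A k ha) (subset_closure hb)

theorem IsCofinalChain.isStrongCofinalChain_coe {C : ℕ → Subsemigroup S}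
    (hC : IsCofinalChain C) : IsStrongCofinalChain fun m => (C m : Set S) := by
  obtain ⟨hmono, hproper, hunion⟩ := hC
  exact ⟨hmono, fun m h => hproper m (SetLike.coe_injective h), hunion,
    fun m _ hs _ ht => hmono m (mul_mem hs ht)⟩

theorem spowSet_subset_of_mul_mem {C : ℕ → Set S} (hmono : ∀ m, C m ⊆ C (m + 1))
    (hmul : ∀ m, ∀ s ∈ C m, ∀ t ∈ C m, s * t ∈ C (m + 1)) (m : ℕ) :
    ∀ k, spowSet (C m) k ⊆ C (m + k)
  | 0 => subset_rfl
  | k + 1 => by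
    rintro _ ⟨a, ha, b, hb, rfl⟩
    have hb' : b ∈ C (m + k) := monotone_nat_of_le_succ hmono (m.le_add_right k) hb
    exact hmul (m + k) a (spowSet_subset_of_mul_mem hmono hmul m k ha) b hb'

theorem IsStrongCofinalChain.closure_ne_top {C : ℕ → Set S} (hC : IsStrongCofinalChain C)
    (hB : BergmanProperty S) (m : ℕ) : closure (C m) ≠ ⊤ := by
  obtain ⟨hmono, hproper, -, hmul⟩ := hC
  intro hm
  obtain ⟨n, hn⟩ := hB (C m) hm
  refine hproper (m + n) (Set.eq_univ_of_forall fun s => ?_)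
  obtain ⟨k, hk, hks⟩ := hn s
  exact monotone_nat_of_le_succ hmono (by omega) (spowSet_subset_of_mul_mem hmono hmul m k hks)

theorem IsStrongCofinalChain.isCofinalChain_closure {C : ℕ → Set S}
    (hC : IsStrongCofinalChain C) (hB : BergmanProperty S) :
    IsCofinalChain fun m => closure (C m) :=
  ⟨fun m => closure_mono (hC.1 m), hC.closure_ne_top hB,
    Set.eq_univ_of_univ_subset (hC.2.2.1 ▸ Set.iUnion_mono fun _ => subset_closure)⟩

end Mul

section Semigroup

variable {S : Type*} [Semigroup S]

theorem spowSet_mul_spowSet (A : Set S) (i : ℕ) :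
    ∀ j, spowSet A i * spowSet A j ⊆ spowSet A (i + j + 1)
  | 0 => subset_rfl
  | j + 1 => by
    rintro _ ⟨a, ha, _, ⟨b, hb, c, hc, rfl⟩, rfl⟩
    show a * (b * c) ∈ _
    rw [← mul_assoc]
    exact Set.mul_mem_mul (spowSet_mul_spowSet A i j (Set.mul_mem_mul ha hb)) hc

theorem coe_closure_eq_iUnion_spowSet (A : Set S) :
    (closure A : Set S) = ⋃ m, spowSet A m := by
  refine subset_antisymm ?_ (Set.iUnion_subset (spowSet_subset_closure A))
  let T : Subsemigroup S :=
    { carrier := ⋃ m, spowSet A m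
      mul_mem' := by
        intro a b ha hb
        obtain ⟨i, hi⟩ := Set.mem_iUnion.mp ha
        obtain ⟨j, hj⟩ := Set.mem_iUnion.mp hb
        exact Set.mem_iUnion.mpr ⟨i + j + 1, spowSet_mul_spowSet A i j (Set.mul_mem_mul hi hj)⟩ }
  exact closure_le (S := T).mpr (Set.subset_iUnion (spowSet A) 0)

theorem isStrongCofinalChain_iUnion_spowSet_lt_two_pow {A : Set S} (hA : closure A = ⊤)
    (hB : ∀ n : ℕ, ∃ s : S, ∀ m ≤ n, s ∉ spowSet A m) :
    IsStrongCofinalChain fun n => ⋃ m < 2 ^ n, spowSet A m := by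
  refine ⟨fun n => ?_, fun n h => ?_, ?_, fun n s hs t ht => ?_⟩
  · exact Set.biUnion_subset_biUnion_left fun m (hm : m < 2 ^ n) =>
      hm.trans_le (Nat.pow_le_pow_right two_pos n.le_succ)
  · obtain ⟨s, hs⟩ := hB (2 ^ n - 1)
    obtain ⟨m, hm, hms⟩ := Set.mem_iUnion₂.mp (h ▸ Set.mem_univ s)
    exact hs m (Nat.le_sub_one_of_lt hm) hms
  · refine Set.eq_univ_of_forall fun s => ?_
    have hs : s ∈ (closure A : Set S) := hA ▸ mem_top s
    obtain ⟨m, hm⟩ := Set.mem_iUnion.mp (coe_closure_eq_iUnion_spowSet A ▸ hs)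
    exact Set.mem_iUnion.mpr ⟨m, Set.mem_iUnion₂.mpr ⟨m, Nat.lt_two_pow_self, hm⟩⟩
  · obtain ⟨i, hi, his⟩ := Set.mem_iUnion₂.mp hs
    obtain ⟨j, hj, hjt⟩ := Set.mem_iUnion₂.mp ht
    refine Set.mem_iUnion₂.mpr ⟨i + j + 1, ?_, spowSet_mul_spowSet A i j (Set.mul_mem_mul his hjt)⟩
    rw [pow_succ]
    omega

end Semigroup

theorem stmt17_general {S : Type*} [Semigroup S] :
    (¬∃ C : ℕ → Set S, (∀ m, C m ⊆ C (m + 1)) ∧ (∀ m, C m ≠ Set.univ) ∧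
        (⋃ m, C m) = Set.univ ∧ (∀ m, ∀ s ∈ C m, ∀ t ∈ C m, s * t ∈ C (m + 1)))
      ↔ ((¬∃ C : ℕ → Subsemigroup S, (∀ m, C m ≤ C (m + 1)) ∧ (∀ m, C m ≠ ⊤) ∧
            (⋃ m, (C m : Set S)) = Set.univ) ∧
          (∀ A : Set S, Subsemigroup.closure A = ⊤ →
            ∃ n : ℕ, ∀ s : S, ∃ m ≤ n, s ∈ spowSet A m)) := by
  constructor
  · intro hscf
    refine ⟨fun ⟨C, hC⟩ => hscf ⟨_, IsCofinalChain.isStrongCofinalChain_coe hC⟩, fun A hA => ?_⟩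
    by_contra! hB
    exact hscf ⟨_, isStrongCofinalChain_iUnion_spowSet_lt_two_pow hA hB⟩
  · rintro ⟨hcf, hB⟩ ⟨C, hC⟩
    exact hcf ⟨_, IsStrongCofinalChain.isCofinalChain_closure hC hB⟩

/-- For a non-finitely-generated semigroup `S`: `scf(S) > ℵ₀` (no countable chain of
proper subsets `S₀ ⊆ S₁ ⊆ ⋯` with union `S` and `SₙSₙ ⊆ S_{n+1}`) if and only if
`cf(S) > ℵ₀` (no countable chain of proper subsemigroups with union `S`) and `S` has
Bergman's property (for every generating set `A` there is `n` with
`S = A ∪ A² ∪ ⋯ ∪ Aⁿ`). -/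
theorem stmt17 {S : Type*} [Semigroup S]
    (hnfg : ¬∃ X : Set S, X.Finite ∧ Subsemigroup.closure X = ⊤) :
    (¬∃ C : ℕ → Set S, (∀ m, C m ⊆ C (m + 1)) ∧ (∀ m, C m ≠ Set.univ) ∧
        (⋃ m, C m) = Set.univ ∧ (∀ m, ∀ s ∈ C m, ∀ t ∈ C m, s * t ∈ C (m + 1)))
      ↔ ((¬∃ C : ℕ → Subsemigroup S, (∀ m, C m ≤ C (m + 1)) ∧ (∀ m, C m ≠ ⊤) ∧
            (⋃ m, (C m : Set S)) = Set.univ) ∧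
          (∀ A : Set S, Subsemigroup.closure A = ⊤ →
            ∃ n : ℕ, ∀ s : S, ∃ m ≤ n, s ∈ spowSet A m)) :=
  stmt17_general
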